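/- Let (A, ∘) be an anti-pre-Lie algebra and ω a symmetric bilinear form on A satisfying the invariance condition ω(x∘y, z) = ω(y, [x,z]) where [x,z] = x∘z - z∘x. Then ω is a commutative 2-cocycle on the sub-adjacent Lie algebra (A, [,]), i.e., ω([x,y], z) + ω([y,z], x) + ω([z,x], y) = 0 for all x, y, z ∈ A. -/

import Mathlib

/-- An anti-pre-Lie algebra structure on a vector space `A`. -/
def IsAntiPreLie {k A : Type*} [Field k] [AddCommGroup A] [Module k A]
    (c : A →ₗ[k] A →ₗ[k] A) : Prop :=
  (∀ x y z, c x (c y z) - c y (c x z) = c (c y x - c x y) z) ∧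
  (∀ x y z, c (c x y - c y x) z + c (c y z - c z y) x + c (c z x - c x z) y = 0)

/-!
Expanding `[x, y] = x ∘ y - y ∘ x` and applying invariance to both products gives
`ω([x, y], z) = ω(y, [x, z]) - ω(x, [y, z])`; by symmetry and antisymmetry of the
commutator the right-hand side is `-ω([z, x], y) - ω([y, z], x)`, which is the cocycle identity.
-/

section InvariantForm

variable {R A : Type*} [CommRing R] [AddCommGroup A] [Module R A]
  {c : A →ₗ[R] A →ₗ[R] A} {ω : A →ₗ[R] A →ₗ[R] R}

theorem invariantForm_commutator_left (hsym : ∀ x y : A, ω x y = ω y x)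
    (hinv : ∀ x y z : A, ω (c x y) z = ω y (c x z - c z x)) (x y z : A) :
    ω (c x y - c y x) z = ω (c x z - c z x) y - ω (c y z - c z y) x := by
  rw [map_sub, LinearMap.sub_apply, hinv, hinv, hsym y, hsym x]

end InvariantForm

theorem invariant_form_commutative_two_cocycle_general {k A : Type*} [Field k] [AddCommGroup A]
    [Module k A] (c : A →ₗ[k] A →ₗ[k] A)
    (ω : A →ₗ[k] A →ₗ[k] k)
    (hsym : ∀ x y : A, ω x y = ω y x)
    (hinv : ∀ x y z : A, ω (c x y) z = ω y (c x z - c z x)) :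
    ∀ x y z : A,
      ω (c x y - c y x) z + ω (c y z - c z y) x + ω (c z x - c x z) y = 0 := by
  intro x y z
  have hanti : c z x - c x z = -(c x z - c z x) := (neg_sub _ _).symm
  rw [invariantForm_commutator_left hsym hinv, hanti, map_neg, LinearMap.neg_apply]
  ring

/-- a symmetric invariant bilinear form on an anti-pre-Lie algebra is a
commutative 2-cocycle on the sub-adjacent Lie algebra. -/
theorem invariant_form_commutative_two_cocycle {k A : Type*} [Field k] [AddCommGroup A]
    [Module k A] (c : A →ₗ[k] A →ₗ[k] A) (h : IsAntiPreLie c)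
    (ω : A →ₗ[k] A →ₗ[k] k)
    (hsym : ∀ x y : A, ω x y = ω y x)
    (hinv : ∀ x y z : A, ω (c x y) z = ω y (c x z - c z x)) :
    ∀ x y z : A,
      ω (c x y - c y x) z + ω (c y z - c z y) x + ω (c z x - c x z) y = 0 :=
  invariant_form_commutative_two_cocycle_general c ω hsym hinv
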